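/- Let n ∈ ℕ, n ≥ 1, and let A be the weighted Neumann graph Laplacian on {0,…,n−1}³ defined in the context. For every m ∈ {0,1,…,n−1}³, the function φ_m(k) = ∏_{i=1}^3 cos(π m_i (k_i + 1/2) / n) satisfies A φ_m = λ_m φ_m, where λ_m = (1/8) [ Σ_{i=1}^3 (1 − cos(π m_i / n)) + Σ_{1 ≤ i < j ≤ 3} (1 − cos(π m_i / n) cos(π m_j / n)) + (1 − ∏_{i=1}^3 cos(π m_i / n)) ]. -/

import Mathlib

open Real

/-- Coordinatewise reflection: maps `−1` to `0`, `n` to `n−1`, and fixes everything else. -/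
def reflect (n : ℕ) (z : ℤ) : ℤ :=
  if z = -1 then 0 else if z = (n : ℤ) then (n : ℤ) - 1 else z

/-- The weighted Neumann graph Laplacian on `{0,…,n−1}³`:
`(A f)(k) = (1/16) Σ_{ε ∈ {−1,0,1}³, ε ≠ 0} 2^{1−|ε|₁} (f(k) − f(ρ(k+ε)))`. -/
noncomputable def graphLap (n : ℕ) (f : (Fin 3 → ℤ) → ℝ) (k : Fin 3 → ℤ) : ℝ :=
  (1 / 16) * ∑ ε ∈ (Finset.Icc (fun _ => (-1 : ℤ)) (fun _ => (1 : ℤ))).erase 0,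
    (2 : ℝ) ^ ((1 : ℤ) - ∑ i, |ε i|) * (f k - f (fun i => reflect n (k i + ε i)))

/-! Each factor `cos (π m (z + 1/2) / n)` of the mode is symmetric about `z = -1/2` and about
`z = n - 1/2` (there because `sin (π m) = 0`), so the reflection `ρ` does not change the mode and
the Neumann stencil acts as the free stencil on `ℤ³`. The weight `2^{1-|ε|₁} = 2 ∏ᵢ 2^{-|εᵢ|}`
factorises, so the stencil sum is `2 (8 φ - ∏ᵢ Sᵢ)` where `Sᵢ` is the one-dimensional stencil
`(1/2, 1, 1/2)` applied to the `i`-th factor; that stencil multiplies `cos (θ (z + 1/2))` by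
`1 + cos θ`. Expanding `8 - ∏ᵢ (1 + cos θᵢ)` gives `λ_m`. -/

open Finset

theorem zpow_sum₀ {ι K : Type*} [CommGroupWithZero K] {a : K} (ha : a ≠ 0) (s : Finset ι)
    (f : ι → ℤ) : a ^ (∑ i ∈ s, f i) = ∏ i ∈ s, a ^ f i := by
  classical
  induction s using Finset.induction_on with
  | empty => simp
  | insert j s hj ih => rw [sum_insert hj, prod_insert hj, zpow_add₀ ha, ih]

theorem Icc_neg_one_one : Icc (-1 : ℤ) 1 = {-1, 0, 1} := by decide

theorem sum_two_zpow_neg_abs : ∑ e ∈ Icc (-1 : ℤ) 1, (2 : ℝ) ^ (-|e|) = 2 := by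
  rw [Icc_neg_one_one]
  norm_num

theorem sum_two_zpow_neg_abs_mul_cos (θ : ℝ) (z : ℤ) :
    ∑ e ∈ Icc (-1 : ℤ) 1, (2 : ℝ) ^ (-|e|) * cos (θ * (((z + e : ℤ) : ℝ) + 1 / 2))
      = (1 + cos θ) * cos (θ * ((z : ℝ) + 1 / 2)) := by
  rw [Icc_neg_one_one, sum_insert (by decide), sum_insert (by decide), sum_singleton]
  have hsub : θ * (((z + -1 : ℤ) : ℝ) + 1 / 2) = θ * ((z : ℝ) + 1 / 2) - θ := by push_cast; ring
  have hadd : θ * (((z + 1 : ℤ) : ℝ) + 1 / 2) = θ * ((z : ℝ) + 1 / 2) + θ := by push_cast; ring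
  rw [hsub, hadd, cos_sub, cos_add]
  norm_num
  ring

theorem cos_reflect (n : ℕ) (m z : ℤ) :
    cos (π * m / n * ((reflect n z : ℝ) + 1 / 2)) = cos (π * m / n * ((z : ℝ) + 1 / 2)) := by
  rcases Nat.eq_zero_or_pos n with rfl | hn
  · simp -- `π * m / 0 = 0`
  have hn0 : (n : ℝ) ≠ 0 := by positivity
  unfold reflect
  split_ifs with h₁ h₂
  · rw [h₁, ← cos_neg]
    push_cast
    ring_nf
  · have hθ : π * m / n * n = m * π := by field_simp
    rw [h₂]
    push_cast
    rw [show π * m / n * (n - 1 + 1 / 2) = m * π - π * m / n / 2 by rw [← hθ]; ring,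
      show π * m / n * (n + 1 / 2) = m * π + π * m / n / 2 by rw [← hθ]; ring,
      cos_sub, cos_add, sin_int_mul_pi]
    ring
  · rfl

theorem two_zpow_one_sub_sum_abs {ι : Type*} [Fintype ι] (ε : ι → ℤ) :
    (2 : ℝ) ^ ((1 : ℤ) - ∑ i, |ε i|) = 2 * ∏ i, (2 : ℝ) ^ (-|ε i|) := by
  rw [sub_eq_add_neg, zpow_add₀ two_ne_zero, zpow_one, ← sum_neg_distrib, zpow_sum₀ two_ne_zero]

theorem graphLap_prod_of_reflect_invariant (n : ℕ) (g : Fin 3 → ℤ → ℝ)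
    (hg : ∀ i z, g i (reflect n z) = g i z) (k : Fin 3 → ℤ) :
    graphLap n (fun j => ∏ i, g i (j i)) k
      = (1 / 8) * (8 * ∏ i, g i (k i)
          - ∏ i, ∑ e ∈ Icc (-1 : ℤ) 1, (2 : ℝ) ^ (-|e|) * g i (k i + e)) := by
  have hterm (ε : Fin 3 → ℤ) :
      (2 : ℝ) ^ ((1 : ℤ) - ∑ i, |ε i|) *
          (∏ i, g i (k i) - ∏ i, g i (reflect n (k i + ε i)))
        = 2 * ∏ i, (2 : ℝ) ^ (-|ε i|) * g i (k i)
          - 2 * ∏ i, (2 : ℝ) ^ (-|ε i|) * g i (k i + ε i) := by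
    simp only [hg, prod_mul_distrib, two_zpow_one_sub_sum_abs]
    ring
  unfold graphLap
  rw [sum_erase _ (by simp [hg]), sum_congr rfl fun ε _ => hterm ε, sum_sub_distrib,
    ← mul_sum, ← mul_sum, Pi.Icc_eq,
    ← prod_univ_sum (fun _ => Icc (-1 : ℤ) 1) fun i e => (2 : ℝ) ^ (-|e|) * g i (k i),
    ← prod_univ_sum (fun _ => Icc (-1 : ℤ) 1) fun i e => (2 : ℝ) ^ (-|e|) * g i (k i + e)]
  simp only [← sum_mul, sum_two_zpow_neg_abs, prod_mul_distrib, prod_const, card_univ,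
    Fintype.card_fin]
  ring

theorem eight_sub_prod_one_add (c : Fin 3 → ℝ) :
    8 - ∏ i, (1 + c i)
      = (∑ i, (1 - c i)) + (∑ p ∈ univ.filter (fun p : Fin 3 × Fin 3 => p.1 < p.2),
          (1 - c p.1 * c p.2)) + (1 - ∏ i, c i) := by
  have hpairs : univ.filter (fun p : Fin 3 × Fin 3 => p.1 < p.2) = {(0, 1), (0, 2), (1, 2)} := by
    decide
  rw [hpairs, sum_insert (by decide), sum_insert (by decide), sum_singleton, Fin.sum_univ_three,
    Fin.prod_univ_three, Fin.prod_univ_three]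
  ring

theorem graphLap_eigen_general (n : ℕ) (m : Fin 3 → ℕ) (k : Fin 3 → ℤ) :
    graphLap n (fun j => ∏ i, Real.cos (π * (m i) * ((j i : ℝ) + 1 / 2) / n)) k
      = (1 / 8) * ((∑ i, (1 - Real.cos (π * (m i) / n))) +
          (∑ p ∈ Finset.univ.filter (fun p : Fin 3 × Fin 3 => p.1 < p.2),
            (1 - Real.cos (π * (m p.1) / n) * Real.cos (π * (m p.2) / n))) +
          (1 - ∏ i, Real.cos (π * (m i) / n))) *
        ∏ i, Real.cos (π * (m i) * ((k i : ℝ) + 1 / 2) / n) := by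
  have hmode : ∀ j : Fin 3 → ℤ, ∏ i, cos (π * (m i) * ((j i : ℝ) + 1 / 2) / n)
      = ∏ i, cos (π * (m i : ℤ) / n * ((j i : ℝ) + 1 / 2)) := fun j => by
    push_cast
    simp only [mul_div_right_comm]
  simp only [hmode]
  rw [graphLap_prod_of_reflect_invariant n
      (fun i z => cos (π * (m i : ℤ) / n * ((z : ℝ) + 1 / 2))) (fun i z => cos_reflect n (m i) z),
    ← eight_sub_prod_one_add]
  simp only [sum_two_zpow_neg_abs_mul_cos, prod_mul_distrib]
  push_cast
  ring

/-- Eigenvectors of the weighted Neumann graph Laplacian: `A φ_m = λ_m φ_m` with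
`φ_m(k) = ∏_i cos(π m_i (k_i + 1/2)/n)`. -/
theorem graphLap_eigen (n : ℕ) (hn : 1 ≤ n) (m : Fin 3 → ℕ) (hm : ∀ i, m i < n)
    (k : Fin 3 → ℤ) (hk : ∀ i, 0 ≤ k i ∧ k i ≤ (n : ℤ) - 1) :
    graphLap n (fun j => ∏ i, Real.cos (π * (m i) * ((j i : ℝ) + 1 / 2) / n)) k
      = (1 / 8) * ((∑ i, (1 - Real.cos (π * (m i) / n))) +
          (∑ p ∈ Finset.univ.filter (fun p : Fin 3 × Fin 3 => p.1 < p.2),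
            (1 - Real.cos (π * (m p.1) / n) * Real.cos (π * (m p.2) / n))) +
          (1 - ∏ i, Real.cos (π * (m i) / n))) *
        ∏ i, Real.cos (π * (m i) * ((k i : ℝ) + 1 / 2) / n) :=
  graphLap_eigen_general n m k
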